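/- arXiv:2302.14004 — 2 statements merged into one kernel-verified Lean document; each statement's English description precedes it below -/
import Mathlib

section
/- Let μ and μ' be probability distributions on X × A whose state marginals ν(x) = Σ_a μ(x,a) and ν'(x) = Σ_a μ'(x,a) satisfy the Bellman flow constraints ν = γ Pᵀμ + (1−γ) ν₀ and ν' = γ Pᵀμ' + (1−γ) ν₀. Then KL(ν ‖ ν') ≤ γ · KL(μ ‖ μ'). -/
open scoped ENNReal

open Classical in
/-- Relative entropy between two (finitely supported) distributions given as functions,
valued in `[0,∞]`, with `KL(p‖q) = ∞` when `p` is not absolutely continuous w.r.t. `q`. -/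
noncomputable def KLd {S : Type*} [Fintype S] (p q : S → ℝ) : ℝ≥0∞ :=
  if ∀ s, q s = 0 → p s = 0 then
    ENNReal.ofReal (∑ s, if p s = 0 then (0 : ℝ) else p s * Real.log (p s / q s))
  else ⊤

/-!
The state marginal at `x'` is a mixture: by the flow constraint it is `(1-γ)ν₀(x')` plus the
sum over `(x,a)` of `γ P(x'|x,a) μ(x,a)`, and likewise for `μ'` with the same weights.
The log-sum inequality applied to these two mixtures bounds the `x'`-th term of `KL(ν‖ν')` by
`γ Σ_{x,a} P(x'|x,a) μ(x,a) log (μ(x,a)/μ'(x,a))`, the `ν₀` parts cancelling inside the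
logarithm. Summing over `x'` and using `Σ_{x'} P(x'|x,a) = 1` gives `γ KL(μ‖μ')`.
-/

open Finset Real

lemma mul_log_add_sub_le_mul_log_div {a b r : ℝ} (ha : 0 ≤ a) (hb : 0 ≤ b)
    (hab : b = 0 → a = 0) (hr : 0 < r) :
    a * log r + (a - b * r) ≤ a * log (a / b) := by
  rcases ha.eq_or_lt with rfl | ha
  · simpa using mul_nonneg hb hr.le
  have hb : 0 < b := hb.lt_of_ne fun h => ha.ne' (hab h.symm)
  calc a * log r + (a - b * r) = a * (log r + (1 - (a / (b * r))⁻¹)) := by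
        field_simp
    _ ≤ a * (log r + log (a / (b * r))) := by
        gcongr
        exact one_sub_inv_le_log_of_pos (by positivity)
    _ = a * log (a / b) := by
        rw [← log_mul hr.ne' (by positivity)]
        field_simp

/-- The log-sum inequality. -/
theorem sum_mul_log_div_sum_le {ι : Type*} [Fintype ι] {a b : ι → ℝ} (ha : ∀ i, 0 ≤ a i)
    (hb : ∀ i, 0 ≤ b i) (hab : ∀ i, b i = 0 → a i = 0) :
    (∑ i, a i) * log ((∑ i, a i) / ∑ i, b i) ≤ ∑ i, a i * log (a i / b i) := by
  rcases (sum_nonneg fun i _ => ha i).eq_or_lt with hA | hA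
  · have ha0 : ∀ i, a i = 0 := fun i =>
      (sum_eq_zero_iff_of_nonneg fun i _ => ha i).1 hA.symm i (mem_univ i)
    simp [ha0]
  have hB : 0 < ∑ i, b i := by
    obtain ⟨i, -, hi⟩ := exists_lt_of_sum_lt (s := univ) (f := 0) (g := a) (by simpa using hA)
    exact sum_pos' (fun i _ => hb i)
      ⟨i, mem_univ i, (hb i).lt_of_ne fun h => hi.ne' (hab i h.symm)⟩
  calc (∑ i, a i) * log ((∑ i, a i) / ∑ i, b i)
      = ∑ i, (a i * log ((∑ i, a i) / ∑ i, b i) + (a i - b i * ((∑ i, a i) / ∑ i, b i))) := by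
        rw [sum_add_distrib, sum_sub_distrib, ← sum_mul, ← sum_mul, mul_div_cancel₀ _ hB.ne']
        ring
    _ ≤ ∑ i, a i * log (a i / b i) :=
        sum_le_sum fun i _ => mul_log_add_sub_le_mul_log_div (ha i) (hb i) (hab i) (div_pos hA hB)

lemma add_sum_mul_log_div_le {ι : Type*} [Fintype ι] {c : ℝ} {w a b : ι → ℝ} (hc : 0 ≤ c)
    (hw : ∀ i, 0 ≤ w i) (ha : ∀ i, 0 ≤ a i) (hb : ∀ i, 0 ≤ b i) (hab : ∀ i, b i = 0 → a i = 0) :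
    (c + ∑ i, w i * a i) * log ((c + ∑ i, w i * a i) / (c + ∑ i, w i * b i))
      ≤ ∑ i, w i * (a i * log (a i / b i)) := by
  have h := sum_mul_log_div_sum_le (a := fun o : Option ι => o.elim c fun i => w i * a i)
    (b := fun o => o.elim c fun i => w i * b i)
    (by rintro (_ | i); exacts [hc, mul_nonneg (hw i) (ha i)])
    (by rintro (_ | i); exacts [hc, mul_nonneg (hw i) (hb i)])
    (by
      rintro (_ | i) h
      · exact h
      · rcases mul_eq_zero.1 h with h | h <;> simp [h, hab])
  simp only [Fintype.sum_option, Option.elim] at h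
  refine h.trans_eq ?_
  have hc_log : c * log (c / c) = 0 := by
    rcases eq_or_ne c 0 with hc0 | hc0 <;> simp [hc0]
  rw [hc_log, zero_add]
  refine sum_congr rfl fun i _ => ?_
  rcases eq_or_ne (w i) 0 with hwi | hwi
  · simp [hwi]
  · rw [mul_div_mul_left _ _ hwi]
    ring

lemma sum_marginal_mul_log_le {X A : Type*} [Fintype X] [Fintype A] {γ : ℝ} (hγ0 : 0 ≤ γ)
    (hγ1 : γ ≤ 1) {P : X → A → X → ℝ} (hP0 : ∀ x a x', 0 ≤ P x a x')
    (hP1 : ∀ x a, ∑ x', P x a x' = 1) {ν₀ : X → ℝ} (hν0 : ∀ x, 0 ≤ ν₀ x) {μ μ' : X × A → ℝ}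
    (hμ0 : ∀ p, 0 ≤ μ p) (hμ'0 : ∀ p, 0 ≤ μ' p) (hac : ∀ p, μ' p = 0 → μ p = 0)
    (hflow : ∀ x', ∑ a, μ (x', a)
        = γ * (∑ x, ∑ a, P x a x' * μ (x, a)) + (1 - γ) * ν₀ x')
    (hflow' : ∀ x', ∑ a, μ' (x', a)
        = γ * (∑ x, ∑ a, P x a x' * μ' (x, a)) + (1 - γ) * ν₀ x') :
    ∑ x, (∑ a, μ (x, a)) * log ((∑ a, μ (x, a)) / ∑ a, μ' (x, a))
      ≤ γ * ∑ p, μ p * log (μ p / μ' p) := by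
  have hmixture : ∀ x' (m : X × A → ℝ), γ * (∑ x, ∑ a, P x a x' * m (x, a)) + (1 - γ) * ν₀ x'
      = (1 - γ) * ν₀ x' + ∑ p, γ * P p.1 p.2 x' * m p := by
    intro x' m
    rw [Fintype.sum_prod_type, mul_sum, add_comm]
    simp_rw [mul_sum, mul_assoc]
  calc ∑ x', (∑ a, μ (x', a)) * log ((∑ a, μ (x', a)) / ∑ a, μ' (x', a))
      ≤ ∑ x', ∑ p, γ * P p.1 p.2 x' * (μ p * log (μ p / μ' p)) := by
        refine sum_le_sum fun x' _ => ?_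
        rw [hflow x', hflow' x', hmixture, hmixture]
        exact add_sum_mul_log_div_le (mul_nonneg (by linarith) (hν0 x'))
          (fun p => mul_nonneg hγ0 (hP0 _ _ _)) hμ0 hμ'0 hac
    _ = γ * ∑ p, μ p * log (μ p / μ' p) := by
        rw [sum_comm, mul_sum]
        refine sum_congr rfl fun p _ => ?_
        rw [← sum_mul, ← mul_sum, hP1, mul_one]

lemma KLd_eq_ofReal {S : Type*} [Fintype S] {p q : S → ℝ} (h : ∀ s, q s = 0 → p s = 0) :
    KLd p q = ENNReal.ofReal (∑ s, p s * log (p s / q s)) := by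
  rw [KLd, if_pos h]
  congr 1
  refine sum_congr rfl fun s _ => ?_
  split_ifs with hs <;> simp [hs]

lemma KLd_eq_top {S : Type*} [Fintype S] {p q : S → ℝ} (h : ¬∀ s, q s = 0 → p s = 0) :
    KLd p q = ⊤ := by
  rw [KLd, if_neg h]

theorem stmt_3_general {X A : Type*} [Fintype X] [Fintype A]
    (γ : ℝ) (hγ0 : 0 < γ) (hγ1 : γ < 1)
    (P : X → A → X → ℝ) (hP0 : ∀ x a x', 0 ≤ P x a x') (hP1 : ∀ x a, ∑ x', P x a x' = 1)
    (ν₀ : X → ℝ) (hν0 : ∀ x, 0 ≤ ν₀ x)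
    (μ μ' : X × A → ℝ)
    (hμ0 : ∀ p, 0 ≤ μ p)
    (hμ'0 : ∀ p, 0 ≤ μ' p)
    (hflow : ∀ x', ∑ a, μ (x', a)
        = γ * (∑ x, ∑ a, P x a x' * μ (x, a)) + (1 - γ) * ν₀ x')
    (hflow' : ∀ x', ∑ a, μ' (x', a)
        = γ * (∑ x, ∑ a, P x a x' * μ' (x, a)) + (1 - γ) * ν₀ x') :
    KLd (fun x => ∑ a, μ (x, a)) (fun x => ∑ a, μ' (x, a))
      ≤ ENNReal.ofReal γ * KLd μ μ' := by
  by_cases hac : ∀ p, μ' p = 0 → μ p = 0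
  swap
  · rw [KLd_eq_top hac, ENNReal.mul_top (ENNReal.ofReal_pos.2 hγ0).ne']
    exact le_top
  have hac_marginal : ∀ x, ∑ a, μ' (x, a) = 0 → ∑ a, μ (x, a) = 0 := fun x hx =>
    sum_eq_zero fun a _ =>
      hac _ ((sum_eq_zero_iff_of_nonneg fun a _ => hμ'0 (x, a)).1 hx a (mem_univ a))
  rw [KLd_eq_ofReal hac_marginal, KLd_eq_ofReal hac, ← ENNReal.ofReal_mul hγ0.le]
  exact ENNReal.ofReal_le_ofReal (sum_marginal_mul_log_le hγ0.le hγ1.le hP0 hP1 hν0 hμ0 hμ'0 hac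
    hflow hflow')

/-- Contraction of the relative entropy between state marginals:  if `μ, μ'` are distributions
on `X × A` whose state marginals `ν, ν'` satisfy the Bellman flow constraints
`ν = γ Pᵀμ + (1−γ)ν₀` and `ν' = γ Pᵀμ' + (1−γ)ν₀`, then `KL(ν‖ν') ≤ γ KL(μ‖μ')`. -/
theorem stmt_3 {X A : Type*} [Fintype X] [Fintype A] [Nonempty X] [Nonempty A]
    (γ : ℝ) (hγ0 : 0 < γ) (hγ1 : γ < 1)
    (P : X → A → X → ℝ) (hP0 : ∀ x a x', 0 ≤ P x a x') (hP1 : ∀ x a, ∑ x', P x a x' = 1)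
    (ν₀ : X → ℝ) (hν0 : ∀ x, 0 ≤ ν₀ x) (hν1 : ∑ x, ν₀ x = 1)
    (μ μ' : X × A → ℝ)
    (hμ0 : ∀ p, 0 ≤ μ p) (hμ1 : ∑ p : X × A, μ p = 1)
    (hμ'0 : ∀ p, 0 ≤ μ' p) (hμ'1 : ∑ p : X × A, μ' p = 1)
    (hflow : ∀ x', ∑ a, μ (x', a)
        = γ * (∑ x, ∑ a, P x a x' * μ (x, a)) + (1 - γ) * ν₀ x')
    (hflow' : ∀ x', ∑ a, μ' (x', a)
        = γ * (∑ x, ∑ a, P x a x' * μ' (x, a)) + (1 - γ) * ν₀ x') :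
    KLd (fun x => ∑ a, μ (x, a)) (fun x => ∑ a, μ' (x, a))
      ≤ ENNReal.ofReal γ * KLd μ μ' :=
  stmt_3_general γ hγ0 hγ1 P hP0 hP1 ν₀ hν0 μ μ' hμ0 hμ'0 hflow hflow'
end

section
/- Let d ≥ 1, λ > 0, and C > 0. Let T₁, …, T_K be nonempty finite disjoint index sets with total cardinality T = Σ_k |T_k|, and for each k and each t ∈ T_k let φ_{k,t} ∈ ℝ^d satisfy ‖φ_{k,t}‖₂ ≤ C. Define Λ₁ = λ I and Λ_{k+1} = Λ_k + Σ_{t ∈ T_k} φ_{k,t} φ_{k,t}ᵀ. Let E = { k ∈ {1,…,K} : there exists t ∈ T_k with φ_{k,t}ᵀ Λ_k^{−1} φ_{k,t} ≥ 1 }. Then |E| ≤ (d / log 2) · log( 1 + C² T / (λ d) ). -/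
/-!
The potential `log det Λ_k` never decreases, and by the matrix determinant lemma
`det (Λ + φ φᵀ) = det Λ · (1 + φᵀ Λ⁻¹ φ)` it increases by at least `log 2` in every epoch of `E`.
It starts at `d log λ`, and by concavity of `log` on the eigenvalues it ends at most at
`d log (tr Λ / d) ≤ d log (λ + C² T / d)`.
-/

open Finset Real

theorem Fin.sum_univ_sub {M : Type*} [AddCommGroup M] {K : ℕ} (f : ℕ → M) :
    ∑ k : Fin K, (f (k + 1) - f k) = f K - f 0 := by
  rw [Fin.sum_univ_eq_sum_range (fun k => f (k + 1) - f k), sum_range_sub]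

theorem card_nsmul_le_sub_of_le_succ {M : Type*} [AddCommGroup M] [PartialOrder M]
    [IsOrderedAddMonoid M] {K : ℕ} {f : ℕ → M} {s : Finset (Fin K)} {c : M}
    (hmono : ∀ k : Fin K, f k ≤ f (k + 1)) (hjump : ∀ k ∈ s, f k + c ≤ f (k + 1)) :
    #s • c ≤ f K - f 0 :=
  calc #s • c = ∑ k ∈ s, c := by rw [sum_const]
  _ ≤ ∑ k ∈ s, (f (k + 1) - f k) := sum_le_sum fun k hk => le_sub_iff_add_le'.mpr (hjump k hk)
  _ ≤ ∑ k : Fin K, (f (k + 1) - f k) :=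
    sum_le_sum_of_subset_of_nonneg (subset_univ s) fun k _ _ => sub_nonneg.mpr (hmono k)
  _ = f K - f 0 := Fin.sum_univ_sub f

namespace Matrix

variable {n : Type*} {K : ℕ} {Λ : ℕ → Matrix n n ℝ} {S : Fin K → Matrix n n ℝ}

theorem posDef_of_succ_eq_add_posSemidef (h0 : (Λ 0).PosDef) (hS : ∀ k, (S k).PosSemidef)
    (hΛ : ∀ k : Fin K, Λ (k + 1) = Λ k + S k) : ∀ k ≤ K, (Λ k).PosDef
  | 0, _ => h0
  | k + 1, hk => by
    rw [hΛ ⟨k, hk⟩]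
    exact (posDef_of_succ_eq_add_posSemidef h0 hS hΛ k (by omega)).add_posSemidef (hS _)

variable [Fintype n]

theorem trace_eq_add_sum_of_succ_eq_add (hΛ : ∀ k : Fin K, Λ (k + 1) = Λ k + S k) :
    (Λ K).trace = (Λ 0).trace + ∑ k, (S k).trace := by
  rw [← sub_eq_iff_eq_add', ← Fin.sum_univ_sub fun k => (Λ k).trace]
  simp [hΛ, trace_add]

theorem posSemidef_vecMulVec_self (v : n → ℝ) : (vecMulVec v v).PosSemidef := by
  simpa using posSemidef_vecMulVec_self_star v

theorem posSemidef_sum_vecMulVec_self {ι : Type*} (s : Finset ι) (v : ι → n → ℝ) :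
    (∑ t ∈ s, vecMulVec (v t) (v t)).PosSemidef :=
  posSemidef_sum s fun t _ => posSemidef_vecMulVec_self (v t)

theorem trace_vecMulVec_self_le {C : ℝ} (v : n → ℝ) (hv : √(∑ i, v i ^ 2) ≤ C) :
    (vecMulVec v v).trace ≤ C ^ 2 := by
  rw [trace_vecMulVec]
  simpa [dotProduct, sq] using (sqrt_le_iff.mp hv).2

theorem trace_le_of_succ_eq_add_sum_vecMulVec {ι : Type*} {Ts : Fin K → Finset ι}
    {φ : Fin K → ι → n → ℝ} {C : ℝ} (hφ : ∀ k, ∀ t ∈ Ts k, √(∑ i, φ k t i ^ 2) ≤ C)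
    (hΛ : ∀ k : Fin K, Λ (k + 1) = Λ k + ∑ t ∈ Ts k, vecMulVec (φ k t) (φ k t)) :
    (Λ K).trace ≤ (Λ 0).trace + C ^ 2 * ∑ k, (#(Ts k) : ℝ) := by
  rw [trace_eq_add_sum_of_succ_eq_add hΛ, mul_sum]
  gcongr with k
  rw [trace_sum, mul_comm, ← nsmul_eq_mul]
  exact sum_le_card_nsmul _ _ _ fun t ht => trace_vecMulVec_self_le _ (hφ k t ht)

variable [DecidableEq n]

theorem det_add_vecMulVec {R : Type*} [CommRing R] {A : Matrix n n R} (hA : IsUnit A.det)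
    (u w : n → R) : (A + vecMulVec u w).det = A.det * (1 + w ⬝ᵥ A⁻¹ *ᵥ u) := by
  rw [vecMulVec_eq Unit, det_add_replicateCol_mul_replicateRow hA,
    det_unique (1 + replicateRow Unit w * A⁻¹ * replicateCol Unit u), add_apply, one_apply_eq,
    ← replicateRow_vecMul, replicateRow_mul_replicateCol_apply, dotProduct_mulVec]

namespace PosDef

variable {A : Matrix n n ℝ}

theorem det_add_vecMulVec_self (hA : A.PosDef) (v : n → ℝ) :
    (A + vecMulVec v v).det = A.det * (1 + v ⬝ᵥ A⁻¹ *ᵥ v) :=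
  det_add_vecMulVec hA.det_pos.ne'.isUnit v v

theorem det_le_det_add_vecMulVec_self (hA : A.PosDef) (v : n → ℝ) :
    A.det ≤ (A + vecMulVec v v).det := by
  have hq : 0 ≤ v ⬝ᵥ A⁻¹ *ᵥ v := by simpa using hA.inv.posSemidef.dotProduct_mulVec_nonneg v
  rw [hA.det_add_vecMulVec_self]
  exact le_mul_of_one_le_right hA.det_pos.le (by linarith)

theorem det_le_det_add_sum_vecMulVec_self {ι : Type*} (hA : A.PosDef) (s : Finset ι)
    (v : ι → n → ℝ) : A.det ≤ (A + ∑ t ∈ s, vecMulVec (v t) (v t)).det := by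
  classical
  induction s using Finset.induction with
  | empty => simp
  | @insert a s ha ih =>
    have hB := hA.add_posSemidef (posSemidef_sum_vecMulVec_self s v)
    calc A.det ≤ _ := ih
    _ ≤ _ := hB.det_le_det_add_vecMulVec_self (v a)
    _ = _ := by rw [sum_insert ha]; congr 1; abel

theorem two_mul_det_le_det_add_sum_vecMulVec_self {ι : Type*} (hA : A.PosDef) {s : Finset ι}
    (v : ι → n → ℝ) {t₀ : ι} (ht₀ : t₀ ∈ s) (hbig : 1 ≤ v t₀ ⬝ᵥ A⁻¹ *ᵥ v t₀) :
    2 * A.det ≤ (A + ∑ t ∈ s, vecMulVec (v t) (v t)).det :=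
  calc 2 * A.det ≤ (A + vecMulVec (v t₀) (v t₀)).det := by
        rw [hA.det_add_vecMulVec_self]; nlinarith [hA.det_pos]
  _ ≤ _ := by
    classical
    rw [← add_sum_erase s _ ht₀, ← add_assoc]
    exact (hA.add_posSemidef (posSemidef_vecMulVec_self _)).det_le_det_add_sum_vecMulVec_self _ v

theorem log_det_le_card_mul_log_trace_div_card [Nonempty n] (hA : A.PosDef) :
    log A.det ≤ Fintype.card n * log (A.trace / Fintype.card n) := by
  have hH := hA.isHermitian
  have hcard : (0 : ℝ) < Fintype.card n := by exact_mod_cast Fintype.card_pos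
  have hjensen := strictConcaveOn_log_Ioi.concaveOn.le_map_sum (t := univ)
    (w := fun _ => (Fintype.card n : ℝ)⁻¹) (p := hH.eigenvalues) (fun _ _ => by positivity)
    (by simp [hcard.ne']) (fun i _ => hA.eigenvalues_pos i)
  rw [hH.det_eq_prod_eigenvalues, hH.trace_eq_sum_eigenvalues]
  simp only [RCLike.ofReal_real_eq_id, id, smul_eq_mul, ← mul_sum] at hjensen ⊢
  rw [log_prod fun i _ => (hA.eigenvalues_pos i).ne', div_eq_inv_mul]
  exact (inv_mul_le_iff₀ hcard).mp hjensen

theorem log_det_le_of_trace_le [Nonempty n] (hA : A.PosDef) {a : ℝ}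
    (htrace : A.trace ≤ Fintype.card n * a) : log A.det ≤ Fintype.card n * log a := by
  have hcard : (0 : ℝ) < Fintype.card n := by exact_mod_cast Fintype.card_pos
  refine hA.log_det_le_card_mul_log_trace_div_card.trans (mul_le_mul_of_nonneg_left ?_ hcard.le)
  exact log_le_log (div_pos hA.trace_pos hcard) ((div_le_iff₀' hcard).mpr htrace)

end PosDef

theorem card_mul_log_two_le_log_det_sub {ι : Type*} {Ts : Fin K → Finset ι}
    {φ : Fin K → ι → n → ℝ} (h0 : (Λ 0).PosDef)
    (hΛ : ∀ k : Fin K, Λ (k + 1) = Λ k + ∑ t ∈ Ts k, vecMulVec (φ k t) (φ k t))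
    {s : Finset (Fin K)} (hs : ∀ k ∈ s, ∃ t ∈ Ts k, 1 ≤ φ k t ⬝ᵥ (Λ k)⁻¹ *ᵥ φ k t) :
    #s * log 2 ≤ log (Λ K).det - log (Λ 0).det := by
  have hpos (k : Fin K) : (Λ k).PosDef := posDef_of_succ_eq_add_posSemidef h0
    (fun k => posSemidef_sum_vecMulVec_self (Ts k) (φ k)) hΛ k k.is_lt.le
  rw [← nsmul_eq_mul]
  refine card_nsmul_le_sub_of_le_succ (f := fun k => log (Λ k).det) (fun k => ?_) fun k hk => ?_
  · rw [hΛ k]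
    exact log_le_log (hpos k).det_pos ((hpos k).det_le_det_add_sum_vecMulVec_self _ _)
  · obtain ⟨t, ht, hbig⟩ := hs k hk
    rw [hΛ k, add_comm, ← log_mul two_ne_zero (hpos k).det_pos.ne']
    exact log_le_log (mul_pos two_pos (hpos k).det_pos)
      ((hpos k).two_mul_det_le_det_add_sum_vecMulVec_self _ ht hbig)

end Matrix

open Matrix Classical

theorem stmt_11_general {ι : Type*} (d K : ℕ) (hd : 1 ≤ d)
    (lam C : ℝ) (hlam : 0 < lam)
    (Ts : Fin K → Finset ι)
    (φ : Fin K → ι → (Fin d → ℝ))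
    (hφ : ∀ k, ∀ t ∈ Ts k, Real.sqrt (∑ i, (φ k t i) ^ 2) ≤ C)
    (Λ : ℕ → Matrix (Fin d) (Fin d) ℝ)
    (hΛ0 : Λ 0 = lam • (1 : Matrix (Fin d) (Fin d) ℝ))
    (hΛ : ∀ k : Fin K, Λ (k + 1) = Λ k + ∑ t ∈ Ts k, vecMulVec (φ k t) (φ k t))
    (T : ℕ) (hT : T = ∑ k, (Ts k).card) :
    (((Finset.univ.filter fun k : Fin K =>
          ∃ t ∈ Ts k, 1 ≤ φ k t ⬝ᵥ (Λ k)⁻¹.mulVec (φ k t)).card : ℕ) : ℝ)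
      ≤ ((d : ℝ) / Real.log 2) * Real.log (1 + C ^ 2 * (T : ℝ) / (lam * (d : ℝ))) := by
  set E := Finset.univ.filter fun k : Fin K => ∃ t ∈ Ts k, 1 ≤ φ k t ⬝ᵥ (Λ k)⁻¹.mulVec (φ k t)
  set x := C ^ 2 * (T : ℝ) / (lam * d)
  have h0 : (Λ 0).PosDef := by rw [hΛ0]; exact PosDef.one.smul hlam
  have hK : (Λ K).PosDef := posDef_of_succ_eq_add_posSemidef h0
    (fun k => posSemidef_sum_vecMulVec_self (Ts k) (φ k)) hΛ K le_rfl
  have hgrowth := card_mul_log_two_le_log_det_sub h0 hΛ (s := E) fun k hk => (mem_filter.mp hk).2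
  have htrace : (Λ K).trace ≤ Fintype.card (Fin d) * (lam * (1 + x)) :=
    calc (Λ K).trace ≤ (Λ 0).trace + C ^ 2 * ∑ k, (#(Ts k) : ℝ) :=
          trace_le_of_succ_eq_add_sum_vecMulVec hφ hΛ
    _ = _ := by
      rw [hΛ0, trace_smul, trace_one, Fintype.card_fin, smul_eq_mul]
      simp only [x, hT]; push_cast; field_simp
  have : Nonempty (Fin d) := ⟨⟨0, hd⟩⟩
  have hdetK := hK.log_det_le_of_trace_le htrace
  rw [Fintype.card_fin] at hdetK
  have hdet0 : log (Λ 0).det = d * log lam := by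
    rw [hΛ0, det_smul, det_one, mul_one, Fintype.card_fin, log_pow]
  rw [div_mul_eq_mul_div, le_div_iff₀ (log_pos one_lt_two)]
  calc (#E : ℝ) * log 2 ≤ log (Λ K).det - log (Λ 0).det := hgrowth
  _ ≤ d * log (lam * (1 + x)) - d * log lam := by rw [hdet0]; gcongr
  _ = d * log (1 + x) := by rw [log_mul hlam.ne' (by positivity)]; ring

/-- Bound on the number of "bad" epochs: with `Λ₁ = λI` (indexed here as `Λ 0`) and
`Λ_{k+1} = Λ_k + Σ_{t ∈ T_k} φ_{k,t} φ_{k,t}ᵀ`, feature vectors of Euclidean norm at most `C`,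
and `T = Σ_k |T_k|`, the set `E` of epochs containing a feature with
`‖φ_{k,t}‖²_{Λ_k⁻¹} ≥ 1` satisfies `|E| ≤ (d/log 2) log(1 + C² T/(λ d))`. -/
theorem stmt_11 {ι : Type*} [DecidableEq ι] (d K : ℕ) (hd : 1 ≤ d)
    (lam C : ℝ) (hlam : 0 < lam) (hC : 0 < C)
    (Ts : Fin K → Finset ι) (hne : ∀ k, (Ts k).Nonempty)
    (hdisj : ∀ k k', k ≠ k' → Disjoint (Ts k) (Ts k'))
    (φ : Fin K → ι → (Fin d → ℝ))
    (hφ : ∀ k, ∀ t ∈ Ts k, Real.sqrt (∑ i, (φ k t i) ^ 2) ≤ C)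
    (Λ : ℕ → Matrix (Fin d) (Fin d) ℝ)
    (hΛ0 : Λ 0 = lam • (1 : Matrix (Fin d) (Fin d) ℝ))
    (hΛ : ∀ k : Fin K, Λ (k + 1) = Λ k + ∑ t ∈ Ts k, vecMulVec (φ k t) (φ k t))
    (T : ℕ) (hT : T = ∑ k, (Ts k).card) :
    (((Finset.univ.filter fun k : Fin K =>
          ∃ t ∈ Ts k, 1 ≤ φ k t ⬝ᵥ (Λ k)⁻¹.mulVec (φ k t)).card : ℕ) : ℝ)
      ≤ ((d : ℝ) / Real.log 2) * Real.log (1 + C ^ 2 * (T : ℝ) / (lam * (d : ℝ))) :=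
  stmt_11_general d K hd lam C hlam Ts φ hφ Λ hΛ0 hΛ T hT
end
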